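/- Let R be an algebraic curvature tensor on ℝⁿ (n ≥ 4). Then R has nonnegative isotropic curvature if and only if R(ζ,η,ζ̄,η̄) ≥ 0 for all vectors ζ, η in the complexification ℂⁿ satisfying g(ζ,ζ) = g(ζ,η) = g(η,η) = 0, where g denotes the complex-bilinear extension of the standard inner product and R is extended complex multilinearly. -/

import Mathlib

noncomputable section
open scoped BigOperators ComplexOrder

def dotp {n : ℕ} (X Y : Fin n → ℝ) : ℝ := ∑ i, X i * Y i

def ON4 {n : ℕ} (e₁ e₂ e₃ e₄ : Fin n → ℝ) : Prop :=
  dotp e₁ e₁ = 1 ∧ dotp e₂ e₂ = 1 ∧ dotp e₃ e₃ = 1 ∧ dotp e₄ e₄ = 1 ∧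
  dotp e₁ e₂ = 0 ∧ dotp e₁ e₃ = 0 ∧ dotp e₁ e₄ = 0 ∧
  dotp e₂ e₃ = 0 ∧ dotp e₂ e₄ = 0 ∧ dotp e₃ e₄ = 0

/-- Complex bilinear extension of the standard inner product. -/
def gc {n : ℕ} (ζ η : Fin n → ℂ) : ℂ := ∑ i, ζ i * η i

/-- Componentwise complex conjugation. -/
def conjv {n : ℕ} (ζ : Fin n → ℂ) : Fin n → ℂ := fun i => (starRingEnd ℂ) (ζ i)

/-- Inclusion of real vectors into the complexification. -/
def ιC {n : ℕ} (X : Fin n → ℝ) : Fin n → ℂ := fun i => (X i : ℂ)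

/-!
Write an isotropic vector as `ζ = a + i b`: isotropy means `|a| = |b|` and `a ⊥ b`. Replacing `η`
by `η - μ ζ`, with `μ` chosen to make it Hermitian-orthogonal to `ζ`, keeps the isotropy
conditions and, by the antisymmetries of `R`, the value `R(ζ, η, ζ̄, η̄)`. Then `η = c + i d` with
`a, b, c, d` mutually orthogonal and `|c| = |d|`, so `a, b, c, d` is a rescaled orthonormal
four-frame; expanding `R(a + i b, c + i d, a - i b, c - i d)` with pair symmetry and the Bianchi
identity gives `|a|² |c|²` times its isotropic curvature. The extension inherits the
antisymmetries of `R` because real vectors span `ℂⁿ` over `ℂ`.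
-/

namespace MultilinearMap

variable {R M N : Type*} [CommSemiring R] [AddCommMonoid M] [Module R M]
  [AddCommMonoid N] [Module R N]

-- Rewriting with this lemma, simplifying with `map_add`, `map_smul`, ..., and rewriting back
-- expands `f ![a, b, c, d]` by linearity in all four slots at once.
theorem apply_fin_four_eq_curryLeft (f : MultilinearMap R (fun _ : Fin 4 => M) N)
    (a b c d : M) :
    f ![a, b, c, d] =
      multilinearCurryLeftEquiv R _ N (multilinearCurryLeftEquiv R _ N
        (multilinearCurryLeftEquiv R _ N (multilinearCurryLeftEquiv R _ N f a) b) c) d ![] :=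
  rfl

theorem map_add_smul_fin_four (f : MultilinearMap R (fun _ : Fin 4 => M) N) {ζ ξ : M}
    (hζ : ∀ u v, f ![ζ, ζ, u, v] = 0) (hξ : ∀ u v, f ![u, v, ξ, ξ] = 0)
    (η θ : M) (μ ν : R) :
    f ![ζ, η + μ • ζ, ξ, θ + ν • ξ] = f ![ζ, η, ξ, θ] := by
  simp only [apply_fin_four_eq_curryLeft, map_add, map_smul, LinearMap.add_apply,
    LinearMap.smul_apply, add_apply, smul_apply]
  simp only [← apply_fin_four_eq_curryLeft, hζ, hξ, smul_zero, add_zero]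

theorem domDomCongr_swap_zero_one_apply (f : MultilinearMap R (fun _ : Fin 4 => M) N)
    (a b c d : M) : f.domDomCongr (Equiv.swap 0 1) ![a, b, c, d] = f ![b, a, c, d] :=
  congrArg f (by ext i; fin_cases i <;> rfl)

theorem domDomCongr_swap_two_three_apply (f : MultilinearMap R (fun _ : Fin 4 => M) N)
    (a b c d : M) : f.domDomCongr (Equiv.swap 2 3) ![a, b, c, d] = f ![a, b, d, c] :=
  congrArg f (by ext i; fin_cases i <;> rfl)

end MultilinearMap

variable {n : ℕ}

theorem dotp_eq_dotProduct (X Y : Fin n → ℝ) : dotp X Y = X ⬝ᵥ Y := rfl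

theorem dotp_self_nonneg (X : Fin n → ℝ) : 0 ≤ dotp X X :=
  Finset.sum_nonneg fun i _ => mul_self_nonneg (X i)

def ScaledON4 (a b c d : Fin n → ℝ) : Prop :=
  dotp a a = dotp b b ∧ dotp c c = dotp d d ∧ dotp a b = 0 ∧ dotp a c = 0 ∧ dotp a d = 0 ∧
    dotp b c = 0 ∧ dotp b d = 0 ∧ dotp c d = 0

theorem ON4_inv_sqrt_smul {a b c d : Fin n → ℝ} (h : ScaledON4 a b c d) (ha : 0 < dotp a a)
    (hc : 0 < dotp c c) :
    ON4 ((√(dotp a a))⁻¹ • a) ((√(dotp a a))⁻¹ • b) ((√(dotp c c))⁻¹ • c)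
      ((√(dotp c c))⁻¹ • d) := by
  obtain ⟨haa, hcc, hab, hac, had, hbc, hbd, hcd⟩ := h
  simp only [dotp_eq_dotProduct] at *
  simp only [ON4, dotp_eq_dotProduct, smul_dotProduct, dotProduct_smul, smul_eq_mul, hab, hac,
    had, hbc, hbd, hcd, mul_zero, ← haa, ← hcc]
  refine ⟨?_, ?_, ?_, ?_, by simp⟩ <;> field_simp <;>
    simp [Real.sq_sqrt ha.le, Real.sq_sqrt hc.le]

def isoCurvature (R : MultilinearMap ℝ (fun _ : Fin 4 => (Fin n → ℝ)) ℝ)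
    (e₁ e₂ e₃ e₄ : Fin n → ℝ) : ℝ :=
  R ![e₁, e₃, e₁, e₃] + R ![e₁, e₄, e₁, e₄] + R ![e₂, e₃, e₂, e₃] + R ![e₂, e₄, e₂, e₄]
    - 2 * R ![e₁, e₂, e₃, e₄]

theorem isoCurvature_smul (R : MultilinearMap ℝ (fun _ : Fin 4 => (Fin n → ℝ)) ℝ)
    (r s : ℝ) (a b c d : Fin n → ℝ) :
    isoCurvature R (r • a) (r • b) (s • c) (s • d) = (r * s) ^ 2 * isoCurvature R a b c d := by
  simp only [isoCurvature, R.apply_fin_four_eq_curryLeft, map_smul, LinearMap.smul_apply,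
    smul_apply, smul_eq_mul]
  ring

theorem isoCurvature_nonneg_of_scaledON4
    {R : MultilinearMap ℝ (fun _ : Fin 4 => (Fin n → ℝ)) ℝ}
    (hnic : ∀ e₁ e₂ e₃ e₄, ON4 e₁ e₂ e₃ e₄ → 0 ≤ isoCurvature R e₁ e₂ e₃ e₄)
    {a b c d : Fin n → ℝ} (h : ScaledON4 a b c d) : 0 ≤ isoCurvature R a b c d := by
  have ⟨haa, hcc, _⟩ := h
  rcases (dotp_self_nonneg a).eq_or_lt with ha | ha
  · obtain rfl : b = 0 := dotProduct_self_eq_zero.mp (show dotp b b = 0 by rw [← haa, ha])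
    obtain rfl : a = 0 := dotProduct_self_eq_zero.mp ha.symm
    simpa using (isoCurvature_smul R 0 1 0 0 c d).ge
  rcases (dotp_self_nonneg c).eq_or_lt with hc | hc
  · obtain rfl : d = 0 := dotProduct_self_eq_zero.mp (show dotp d d = 0 by rw [← hcc, hc])
    obtain rfl : c = 0 := dotProduct_self_eq_zero.mp hc.symm
    simpa using (isoCurvature_smul R 1 0 a b 0 0).ge
  set r := √(dotp a a)
  set s := √(dotp c c)
  have hr : r ≠ 0 := Real.sqrt_ne_zero'.mpr ha
  have hs : s ≠ 0 := Real.sqrt_ne_zero'.mpr hc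
  have hscale := isoCurvature_smul R r s (r⁻¹ • a) (r⁻¹ • b) (s⁻¹ • c) (s⁻¹ • d)
  simp only [smul_inv_smul₀ hr, smul_inv_smul₀ hs] at hscale
  rw [hscale]
  exact mul_nonneg (sq_nonneg _) (hnic _ _ _ _ (ON4_inv_sqrt_smul h ha hc))

theorem ιC_neg (X : Fin n → ℝ) : ιC (-X) = -ιC X := by
  ext i; simp [ιC]

theorem ιC_single (j : Fin n) : ιC (Pi.single j 1) = Pi.single j 1 := by
  ext i; by_cases h : i = j <;> simp [ιC, h]

theorem gc_eq_dotProduct (ζ η : Fin n → ℂ) : gc ζ η = ζ ⬝ᵥ η := rfl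

theorem conjv_eq_star (ζ : Fin n → ℂ) : conjv ζ = star ζ := rfl

theorem exists_gc_sub_smul_conjv_eq_zero (ζ η : Fin n → ℂ) :
    ∃ μ : ℂ, gc (η - μ • ζ) (conjv ζ) = 0 := by
  rcases eq_or_ne ζ 0 with rfl | hζ
  · exact ⟨0, by simp [gc, conjv]⟩
  have hpos : gc ζ (conjv ζ) ≠ 0 := by
    rwa [gc_eq_dotProduct, conjv_eq_star, Ne, dotProduct_self_star_eq_zero]
  refine ⟨gc η (conjv ζ) / gc ζ (conjv ζ), ?_⟩
  rw [gc_eq_dotProduct, sub_dotProduct, smul_dotProduct, smul_eq_mul, ← gc_eq_dotProduct,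
    ← gc_eq_dotProduct, div_mul_cancel₀ _ hpos, sub_self]

theorem gc_sub_smul_eq_zero {ζ η : Fin n → ℂ} (hζζ : gc ζ ζ = 0) (hζη : gc ζ η = 0)
    (hηη : gc η η = 0) (μ : ℂ) : gc ζ (η - μ • ζ) = 0 ∧ gc (η - μ • ζ) (η - μ • ζ) = 0 := by
  simp only [gc_eq_dotProduct] at *
  simp [dotProduct_sub, sub_dotProduct, dotProduct_comm η ζ, *]

def ofReIm (a b : Fin n → ℝ) : Fin n → ℂ := ιC a + Complex.I • ιC b

theorem ofReIm_re_im (ζ : Fin n → ℂ) :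
    ofReIm (fun i => (ζ i).re) (fun i => (ζ i).im) = ζ := by
  ext i; simp [ofReIm, ιC, mul_comm Complex.I]

theorem conjv_ofReIm (a b : Fin n → ℝ) : conjv (ofReIm a b) = ofReIm a (-b) := by
  ext i; simp [conjv, ofReIm, ιC]

theorem gc_ofReIm (a b c d : Fin n → ℝ) :
    gc (ofReIm a b) (ofReIm c d) = ⟨dotp a c - dotp b d, dotp a d + dotp b c⟩ := by
  apply Complex.ext <;>
    simp [gc, ofReIm, ιC, dotp, Complex.re_sum, Complex.im_sum, Finset.sum_add_distrib,
      Finset.sum_sub_distrib]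

theorem scaledON4_of_isotropic {a b c d : Fin n → ℝ}
    (hζζ : gc (ofReIm a b) (ofReIm a b) = 0) (hζη : gc (ofReIm a b) (ofReIm c d) = 0)
    (hηη : gc (ofReIm c d) (ofReIm c d) = 0)
    (hηζ : gc (ofReIm c d) (conjv (ofReIm a b)) = 0) :
    ScaledON4 a b c d := by
  rw [conjv_ofReIm] at hηζ
  simp only [gc_ofReIm, Complex.ext_iff, Complex.zero_re, Complex.zero_im, dotp_eq_dotProduct,
    dotProduct_neg, dotProduct_comm b a, dotProduct_comm c a, dotProduct_comm c b,
    dotProduct_comm d a, dotProduct_comm d b, dotProduct_comm d c] at hζζ hζη hηη hηζ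
  simp only [ScaledON4, dotp_eq_dotProduct]
  refine ⟨?_, ?_, ?_, ?_, ?_, ?_, ?_, ?_⟩ <;> linarith

theorem isotropic_ofReIm_of_ON4 {e₁ e₂ e₃ e₄ : Fin n → ℝ} (h : ON4 e₁ e₂ e₃ e₄) :
    gc (ofReIm e₁ e₂) (ofReIm e₁ e₂) = 0 ∧ gc (ofReIm e₁ e₂) (ofReIm e₃ e₄) = 0 ∧
      gc (ofReIm e₃ e₄) (ofReIm e₃ e₄) = 0 := by
  obtain ⟨h₁₁, h₂₂, h₃₃, h₄₄, h₁₂, h₁₃, h₁₄, h₂₃, h₂₄, h₃₄⟩ := h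
  simp only [gc_ofReIm, dotp_eq_dotProduct, dotProduct_comm e₂ e₁, dotProduct_comm e₄ e₃] at *
  simp [Complex.ext_iff, *]

theorem MultilinearMap.ext_ιC {ι N : Type*} [Finite ι] [AddCommMonoid N] [Module ℂ N]
    {f g : MultilinearMap ℂ (fun _ : ι => Fin n → ℂ) N}
    (h : ∀ x : ι → Fin n → ℝ, f (fun i => ιC (x i)) = g (fun i => ιC (x i))) : f = g :=
  Module.Basis.ext_multilinear (fun _ => Pi.basisFun ℂ (Fin n)) fun v => by
    simpa [ιC_single] using h fun i => Pi.single (v i) 1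

theorem MultilinearMap.ext_ιC_fin_four {N : Type*} [AddCommMonoid N] [Module ℂ N]
    {f g : MultilinearMap ℂ (fun _ : Fin 4 => Fin n → ℂ) N}
    (h : ∀ X Y Z W, f ![ιC X, ιC Y, ιC Z, ιC W] = g ![ιC X, ιC Y, ιC Z, ιC W]) : f = g :=
  ext_ιC fun x => by
    rw [show (fun i => ιC (x i)) = ![ιC (x 0), ιC (x 1), ιC (x 2), ιC (x 3)] by
      ext i; fin_cases i <;> rfl]
    exact h _ _ _ _

section Complexification

variable {R : MultilinearMap ℝ (fun _ : Fin 4 => (Fin n → ℝ)) ℝ}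
  {Rc : MultilinearMap ℂ (fun _ : Fin 4 => (Fin n → ℂ)) ℂ}
  (hext : ∀ X Y Z W : Fin n → ℝ, Rc ![ιC X, ιC Y, ιC Z, ιC W] = (R ![X, Y, Z, W] : ℂ))
  (hanti : ∀ X Y Z W, R ![X, Y, Z, W] = - R ![Y, X, Z, W])
  (hpair : ∀ X Y Z W, R ![X, Y, Z, W] = R ![Z, W, X, Y])
  (hbianchi : ∀ X Y Z W, R ![X, Y, Z, W] + R ![Y, Z, X, W] + R ![Z, X, Y, W] = 0)
include hext hanti

theorem complexification_apply_self_left (z u v : Fin n → ℂ) : Rc ![z, z, u, v] = 0 := by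
  have key : Rc = -Rc.domDomCongr (Equiv.swap 0 1) :=
    MultilinearMap.ext_ιC_fin_four fun X Y Z W => by
      rw [neg_apply, Rc.domDomCongr_swap_zero_one_apply, hext, hext, hanti, Complex.ofReal_neg]
  have h := congr($key ![z, z, u, v])
  rw [neg_apply, Rc.domDomCongr_swap_zero_one_apply] at h
  exact self_eq_neg.mp h

include hpair

theorem complexification_apply_self_right (z u v : Fin n → ℂ) : Rc ![u, v, z, z] = 0 := by
  have key : Rc = -Rc.domDomCongr (Equiv.swap 2 3) :=
    MultilinearMap.ext_ιC_fin_four fun X Y Z W => by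
      rw [neg_apply, Rc.domDomCongr_swap_two_three_apply, hext, hext, hpair, hanti, hpair,
        Complex.ofReal_neg]
  have h := congr($key ![u, v, z, z])
  rw [neg_apply, Rc.domDomCongr_swap_two_three_apply] at h
  exact self_eq_neg.mp h

theorem complexification_apply_sub_smul (ζ η : Fin n → ℂ) (μ : ℂ) :
    Rc ![ζ, η - μ • ζ, conjv ζ, conjv (η - μ • ζ)] = Rc ![ζ, η, conjv ζ, conjv η] := by
  conv_rhs => rw [← sub_add_cancel η (μ • ζ), conjv_eq_star, conjv_eq_star, star_add, star_smul]
  exact (Rc.map_add_smul_fin_four (complexification_apply_self_left hext hanti ζ)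
    (complexification_apply_self_right hext hanti hpair (conjv ζ)) _ _ _ _).symm

include hbianchi

theorem complexification_apply_ofReIm_conjv (a b c d : Fin n → ℝ) :
    Rc ![ofReIm a b, ofReIm c d, conjv (ofReIm a b), conjv (ofReIm c d)]
      = isoCurvature R a b c d := by
  rw [conjv_ofReIm, conjv_ofReIm]
  simp only [ofReIm, ιC_neg, Rc.apply_fin_four_eq_curryLeft, map_add, map_smul, map_neg,
    LinearMap.add_apply, LinearMap.smul_apply, LinearMap.neg_apply, add_apply, smul_apply,
    neg_apply, smul_eq_mul]
  simp only [← Rc.apply_fin_four_eq_curryLeft, hext, isoCurvature]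
  have hP (X Y Z W) : (R ![X, Y, Z, W] : ℂ) = R ![Z, W, X, Y] := by exact_mod_cast hpair X Y Z W
  have hA (X Y Z W) : (R ![X, Y, Z, W] : ℂ) = -R ![Y, X, Z, W] := by exact_mod_cast hanti X Y Z W
  have hB (X Y Z W) : (R ![X, Y, Z, W] : ℂ) + R ![Y, Z, X, W] + R ![Z, X, Y, W] = 0 := by
    exact_mod_cast hbianchi X Y Z W
  simp only [mul_add, mul_neg, ← mul_assoc, Complex.I_mul_I, neg_mul, one_mul, neg_neg]
  push_cast
  -- real part: Bianchi; imaginary part: cancels in pairs by pair symmetry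
  linear_combination -hP b d a c - hP b c a d + 2 * hB a b c d - 2 * hA c a b d
    + Complex.I * (hP b c a c + hP a d a c + hP b d b c + hP b d a d)

theorem complexification_nonneg_of_isotropic
    (hnic : ∀ e₁ e₂ e₃ e₄, ON4 e₁ e₂ e₃ e₄ → 0 ≤ isoCurvature R e₁ e₂ e₃ e₄)
    {ζ η : Fin n → ℂ} (hζζ : gc ζ ζ = 0) (hζη : gc ζ η = 0) (hηη : gc η η = 0) :
    0 ≤ Rc ![ζ, η, conjv ζ, conjv η] := by
  obtain ⟨μ, hμ⟩ := exists_gc_sub_smul_conjv_eq_zero ζ η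
  obtain ⟨hζη', hη'η'⟩ := gc_sub_smul_eq_zero hζζ hζη hηη μ
  rw [← complexification_apply_sub_smul hext hanti hpair]
  obtain ⟨a, b, rfl⟩ : ∃ a b, ofReIm a b = ζ := ⟨_, _, ofReIm_re_im ζ⟩
  obtain ⟨c, d, hcd⟩ : ∃ c d, ofReIm c d = η - μ • ofReIm a b := ⟨_, _, ofReIm_re_im _⟩
  rw [← hcd] at hμ hζη' hη'η' ⊢
  rw [complexification_apply_ofReIm_conjv hext hanti hpair hbianchi]
  exact Complex.zero_le_real.mpr <|
    isoCurvature_nonneg_of_scaledON4 hnic (scaledON4_of_isotropic hζζ hζη' hη'η' hμ)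

end Complexification

theorem nic_iff_isotropic_nonneg_general {n : ℕ}
    (R : MultilinearMap ℝ (fun _ : Fin 4 => (Fin n → ℝ)) ℝ)
    (hanti : ∀ X Y Z W, R ![X, Y, Z, W] = - R ![Y, X, Z, W])
    (hpair : ∀ X Y Z W, R ![X, Y, Z, W] = R ![Z, W, X, Y])
    (hbianchi : ∀ X Y Z W,
      R ![X, Y, Z, W] + R ![Y, Z, X, W] + R ![Z, X, Y, W] = 0)
    -- the complex multilinear extension of R
    (Rc : MultilinearMap ℂ (fun _ : Fin 4 => (Fin n → ℂ)) ℂ)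
    (hext : ∀ X Y Z W : Fin n → ℝ,
      Rc ![ιC X, ιC Y, ιC Z, ιC W] = (R ![X, Y, Z, W] : ℂ)) :
    (∀ e₁ e₂ e₃ e₄ : Fin n → ℝ, ON4 e₁ e₂ e₃ e₄ →
      0 ≤ R ![e₁, e₃, e₁, e₃] + R ![e₁, e₄, e₁, e₄] + R ![e₂, e₃, e₂, e₃]
          + R ![e₂, e₄, e₂, e₄] - 2 * R ![e₁, e₂, e₃, e₄]) ↔
    (∀ ζ η : Fin n → ℂ, gc ζ ζ = 0 → gc ζ η = 0 → gc η η = 0 →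
      0 ≤ Rc ![ζ, η, conjv ζ, conjv η]) := by
  refine ⟨fun hnic ζ η => complexification_nonneg_of_isotropic hext hanti hpair hbianchi hnic,
    fun h e₁ e₂ e₃ e₄ hON => ?_⟩
  obtain ⟨hζζ, hζη, hηη⟩ := isotropic_ofReIm_of_ON4 hON
  have hvalue := h _ _ hζζ hζη hηη
  rwa [complexification_apply_ofReIm_conjv hext hanti hpair hbianchi,
    Complex.zero_le_real] at hvalue

theorem nic_iff_isotropic_nonneg {n : ℕ} (hn : 4 ≤ n)
    (R : MultilinearMap ℝ (fun _ : Fin 4 => (Fin n → ℝ)) ℝ)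
    (hanti : ∀ X Y Z W, R ![X, Y, Z, W] = - R ![Y, X, Z, W])
    (hpair : ∀ X Y Z W, R ![X, Y, Z, W] = R ![Z, W, X, Y])
    (hbianchi : ∀ X Y Z W,
      R ![X, Y, Z, W] + R ![Y, Z, X, W] + R ![Z, X, Y, W] = 0)
    -- the complex multilinear extension of R
    (Rc : MultilinearMap ℂ (fun _ : Fin 4 => (Fin n → ℂ)) ℂ)
    (hext : ∀ X Y Z W : Fin n → ℝ,
      Rc ![ιC X, ιC Y, ιC Z, ιC W] = (R ![X, Y, Z, W] : ℂ)) :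
    (∀ e₁ e₂ e₃ e₄ : Fin n → ℝ, ON4 e₁ e₂ e₃ e₄ →
      0 ≤ R ![e₁, e₃, e₁, e₃] + R ![e₁, e₄, e₁, e₄] + R ![e₂, e₃, e₂, e₃]
          + R ![e₂, e₄, e₂, e₄] - 2 * R ![e₁, e₂, e₃, e₄]) ↔
    (∀ ζ η : Fin n → ℂ, gc ζ ζ = 0 → gc ζ η = 0 → gc η η = 0 →
      0 ≤ Rc ![ζ, η, conjv ζ, conjv η]) :=
  nic_iff_isotropic_nonneg_general R hanti hpair hbianchi Rc hext
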